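/- If v is an eigenvector of the reduced operator à = U* A U with eigenvalue λ, and φ = X⁺ V Σ⁻¹ v is nonzero, then φ is an eigenvector of A with the same eigenvalue λ, where A = X⁺ V Σ⁻¹ U*. -/

import Mathlib

open Matrix

theorem Matrix.mul_mulVec_mulVec_eq_smul_of_swap {l m α : Type*} [Fintype l] [Fintype m]
    [CommSemiring α] (B : Matrix l m α) (C : Matrix m l α) {v : m → α} {lam : α}
    (hv : (C * B) *ᵥ v = lam • v) :
    (B * C) *ᵥ (B *ᵥ v) = lam • (B *ᵥ v) := by
  rw [mulVec_mulVec, Matrix.mul_assoc, ← mulVec_mulVec, hv, mulVec_smul]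

theorem dmd_mode_is_eigenvector_general {n m r : ℕ}
    (Xp : Matrix (Fin n) (Fin m) ℂ)
    (U : Matrix (Fin n) (Fin r) ℂ) (V : Matrix (Fin m) (Fin r) ℂ)
    (σ : Fin r → ℂ)
    (hU : Uᴴ * U = 1)
    (A : Matrix (Fin n) (Fin n) ℂ)
    (hA : A = Xp * V * (Matrix.diagonal σ)⁻¹ * Uᴴ)
    (Atil : Matrix (Fin r) (Fin r) ℂ) (hAtil : Atil = Uᴴ * A * U)
    (v : Fin r → ℂ) (lam : ℂ) (hv : Atil *ᵥ v = lam • v)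
    (φ : Fin n → ℂ) (hφ : φ = (Xp * V * (Matrix.diagonal σ)⁻¹) *ᵥ v) :
    A *ᵥ φ = lam • φ := by
  set B := Xp * V * (Matrix.diagonal σ)⁻¹
  have hAtil_eq : Atil = Uᴴ * B := by
    rw [hAtil, hA, Matrix.mul_assoc, Matrix.mul_assoc, hU, Matrix.mul_one]
  rw [hA, hφ]
  exact B.mul_mulVec_mulVec_eq_smul_of_swap Uᴴ (hAtil_eq ▸ hv)

/-- If `v` is an eigenvector of the reduced operator `Ã = U* A U` with eigenvalue `λ`,
and `φ = X⁺ V Σ⁻¹ v` is nonzero, then `φ` is an eigenvector of `A = X⁺ V Σ⁻¹ U*`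
with the same eigenvalue. -/
theorem dmd_mode_is_eigenvector {n m r : ℕ}
    (Xm Xp : Matrix (Fin n) (Fin m) ℂ)
    (U : Matrix (Fin n) (Fin r) ℂ) (V : Matrix (Fin m) (Fin r) ℂ)
    (σ : Fin r → ℂ) (hσ : ∀ k, σ k ≠ 0)
    (hU : Uᴴ * U = 1) (hV : Vᴴ * V = 1)
    (hSVD : Xm = U * Matrix.diagonal σ * Vᴴ)
    (A : Matrix (Fin n) (Fin n) ℂ)
    (hA : A = Xp * V * (Matrix.diagonal σ)⁻¹ * Uᴴ)
    (Atil : Matrix (Fin r) (Fin r) ℂ) (hAtil : Atil = Uᴴ * A * U)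
    (v : Fin r → ℂ) (lam : ℂ) (hv : Atil *ᵥ v = lam • v)
    (φ : Fin n → ℂ) (hφ : φ = (Xp * V * (Matrix.diagonal σ)⁻¹) *ᵥ v)
    (hφ0 : φ ≠ 0) :
    A *ᵥ φ = lam • φ :=
  dmd_mode_is_eigenvector_general Xp U V σ hU A hA Atil hAtil v lam hv φ hφ
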